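/- Let G be a finite simple connected graph on N ≥ 2 vertices with adjacency matrix A and diagonal degree matrix D, and let S̃_adj = (I + D)^{-1/2}(I + A)(I + D)^{-1/2}. Then every eigenvalue λ of S̃_adj satisfies −1 < λ ≤ 1; moreover 1 is an eigenvalue of S̃_adj, attained by the vector with entries √(1 + deg(v)), and all other eigenvalues have absolute value strictly less than 1 (i.e., the eigenvalue 1 is simple). -/

import Mathlib

/-!
Writing `x = (I + D)^{1/2} y`, an eigenvector equation `S̃ x = λ x` gives the Rayleigh identity
`λ (yᵀy + yᵀDy) = yᵀy + yᵀAy`. Positive semidefiniteness of the Laplacian `D - A`, applied to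
`|y|`, gives `|yᵀAy| ≤ yᵀDy`, hence `-1 < λ ≤ 1`. For `λ = 1` the identity forces
`yᵀ(D - A)y = 0`, so `y` is constant on the connected graph and `x` is a multiple of
`√(1 + deg)`; two orthonormal eigenvectors cannot both be multiples of one vector, so the
eigenvalue `1` is simple.
-/

open Matrix Finset

theorem Monotone.apply_eq_and_lt_of_isTop {ι β : Type*} [Preorder ι] [LinearOrder β]
    {f : ι → β} (hf : Monotone f) {m : ι} (hm : IsTop m) {a : β} (hle : ∀ i, f i ≤ a)
    (ha : a ∈ Set.range f) (hfiber : {i | f i = a}.Subsingleton) :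
    f m = a ∧ ∀ i ≠ m, f i < a := by
  obtain ⟨k, rfl⟩ := ha
  have hfm : f m = f k := le_antisymm (hle m) (hf (hm k))
  exact ⟨hfm, fun i hi => (hle i).lt_of_ne fun h => hi (hfiber h hfm)⟩

theorem Orthonormal.eq_of_eq_smul {ι E : Type*} [NormedAddCommGroup E] [InnerProductSpace ℝ E]
    {v : ι → E} (hv : Orthonormal ℝ v) {w : E} {i j : ι} {c d : ℝ} (hi : v i = c • w)
    (hj : v j = d • w) : i = j := by
  by_contra hij
  have hinner : inner ℝ (v i) (v j) = c * d * inner ℝ w w := by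
    rw [hi, hj, real_inner_smul_left, real_inner_smul_right]; ring
  have hnorm (k : ι) (e : ℝ) (hk : v k = e • w) : e * e * inner ℝ w w = 1 := by
    have := real_inner_self_eq_norm_sq (v k)
    rw [hv.1 k, hk, real_inner_smul_left, real_inner_smul_right] at this
    linarith
  have h1 := hnorm i c hi
  have h2 := hnorm j d hj
  have h0 : c * d * inner ℝ w w = 0 := hinner ▸ hv.2 hij
  nlinarith

namespace SimpleGraph

variable {V : Type*} [Fintype V] (G : SimpleGraph V) [DecidableRel G.Adj]

theorem abs_dotProduct_adjMatrix_mulVec_le [DecidableEq V] (y : V → ℝ) :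
    |y ⬝ᵥ G.adjMatrix ℝ *ᵥ y| ≤ y ⬝ᵥ G.degMatrix ℝ *ᵥ y := by
  set z : V → ℝ := fun v => |y v|
  have hlap : 0 ≤ z ⬝ᵥ G.lapMatrix ℝ *ᵥ z := by
    simpa using (posSemidef_lapMatrix ℝ G).dotProduct_mulVec_nonneg z
  calc |y ⬝ᵥ G.adjMatrix ℝ *ᵥ y|
      ≤ ∑ i, ∑ j, |if G.Adj i j then y i * y j else 0| := by
        rw [dotProduct_mulVec_adjMatrix]
        exact (abs_sum_le_sum_abs _ _).trans (sum_le_sum fun i _ => abs_sum_le_sum_abs _ _)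
    _ = z ⬝ᵥ G.adjMatrix ℝ *ᵥ z := by
        rw [dotProduct_mulVec_adjMatrix]
        simp only [z, apply_ite abs, abs_mul, abs_zero]
    _ ≤ z ⬝ᵥ G.degMatrix ℝ *ᵥ z := by
        rwa [lapMatrix, sub_mulVec, dotProduct_sub, sub_nonneg] at hlap
    _ = y ⬝ᵥ G.degMatrix ℝ *ᵥ y := by
        simp only [dotProduct_mulVec_degMatrix, z, mul_assoc, abs_mul_abs_self]

noncomputable def sqrtAugDegree (v : V) : ℝ := √(1 + G.degree v)

theorem sqrtAugDegree_pos (v : V) : 0 < G.sqrtAugDegree v :=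
  Real.sqrt_pos.2 (by positivity)

theorem sqrtAugDegree_mul_self (v : V) : G.sqrtAugDegree v * G.sqrtAugDegree v = 1 + G.degree v :=
  Real.mul_self_sqrt (by positivity)

variable [DecidableEq V]

noncomputable def augNormAdjMatrix : Matrix V V ℝ :=
  diagonal G.sqrtAugDegree⁻¹ * (1 + G.adjMatrix ℝ) * diagonal G.sqrtAugDegree⁻¹

theorem diagonal_sqrtAugDegree_inv_mulVec_diagonal (y : V → ℝ) :
    diagonal G.sqrtAugDegree⁻¹ *ᵥ (diagonal G.sqrtAugDegree *ᵥ y) = y := by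
  ext v
  simp [mulVec_diagonal, (G.sqrtAugDegree_pos v).ne']

theorem augNormAdjMatrix_mulVec_diagonal (y : V → ℝ) :
    G.augNormAdjMatrix *ᵥ (diagonal G.sqrtAugDegree *ᵥ y) =
      diagonal G.sqrtAugDegree⁻¹ *ᵥ ((1 + G.adjMatrix ℝ) *ᵥ y) := by
  rw [augNormAdjMatrix, ← mulVec_mulVec, diagonal_sqrtAugDegree_inv_mulVec_diagonal,
    mulVec_mulVec]

theorem augNormAdjMatrix_mulVec_sqrtAugDegree :
    G.augNormAdjMatrix *ᵥ G.sqrtAugDegree = G.sqrtAugDegree := by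
  have hw : G.sqrtAugDegree = diagonal G.sqrtAugDegree *ᵥ Function.const V 1 := by
    ext v; simp [mulVec_diagonal]
  conv_lhs => rw [hw, augNormAdjMatrix_mulVec_diagonal]
  ext v
  rw [mulVec_diagonal, add_mulVec, one_mulVec, Pi.add_apply, adjMatrix_mulVec_const_apply,
    Function.const_apply, mul_one, ← sqrtAugDegree_mul_self, Pi.inv_apply,
    inv_mul_cancel_left₀ (G.sqrtAugDegree_pos v).ne']

theorem dotProduct_augNormAdjMatrix_mulVec_diagonal (y : V → ℝ) :
    (diagonal G.sqrtAugDegree *ᵥ y) ⬝ᵥ G.augNormAdjMatrix *ᵥ (diagonal G.sqrtAugDegree *ᵥ y) =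
      y ⬝ᵥ y + y ⬝ᵥ G.adjMatrix ℝ *ᵥ y := by
  have hcancel (z : V → ℝ) :
      (diagonal G.sqrtAugDegree *ᵥ y) ⬝ᵥ (diagonal G.sqrtAugDegree⁻¹ *ᵥ z) = y ⬝ᵥ z := by
    refine sum_congr rfl fun v _ => ?_
    simp only [mulVec_diagonal, Pi.inv_apply]
    field_simp [(G.sqrtAugDegree_pos v).ne']
  rw [augNormAdjMatrix_mulVec_diagonal, hcancel, add_mulVec, one_mulVec, dotProduct_add]

theorem dotProduct_diagonal_sqrtAugDegree_mulVec_self (y : V → ℝ) :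
    (diagonal G.sqrtAugDegree *ᵥ y) ⬝ᵥ (diagonal G.sqrtAugDegree *ᵥ y) =
      y ⬝ᵥ y + y ⬝ᵥ G.degMatrix ℝ *ᵥ y := by
  rw [dotProduct_mulVec_degMatrix, dotProduct, dotProduct, ← sum_add_distrib]
  refine sum_congr rfl fun v _ => ?_
  rw [mulVec_diagonal]
  linear_combination (y v * y v) * G.sqrtAugDegree_mul_self v

theorem exists_diagonal_sqrtAugDegree_mulVec_eq (x : V → ℝ) :
    ∃ y, diagonal G.sqrtAugDegree *ᵥ y = x :=
  ⟨diagonal G.sqrtAugDegree⁻¹ *ᵥ x, by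
    ext v; simp [mulVec_diagonal, (G.sqrtAugDegree_pos v).ne']⟩

theorem mem_Ioc_of_augNormAdjMatrix_mulVec_eq_smul {x : V → ℝ} (hx : x ≠ 0) {lam : ℝ}
    (h : G.augNormAdjMatrix *ᵥ x = lam • x) : lam ∈ Set.Ioc (-1) 1 := by
  obtain ⟨y, rfl⟩ := G.exists_diagonal_sqrtAugDegree_mulVec_eq x
  have hy : 0 < y ⬝ᵥ y := by
    refine lt_of_le_of_ne (sum_nonneg fun v _ => mul_self_nonneg (y v)) fun h0 => hx ?_
    rw [eq_comm, dotProduct_self_eq_zero] at h0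
    rw [h0, mulVec_zero]
  have hrayleigh :
      lam * (y ⬝ᵥ y + y ⬝ᵥ G.degMatrix ℝ *ᵥ y) = y ⬝ᵥ y + y ⬝ᵥ G.adjMatrix ℝ *ᵥ y := by
    rw [← dotProduct_diagonal_sqrtAugDegree_mulVec_self,
      ← dotProduct_augNormAdjMatrix_mulVec_diagonal, h, dotProduct_smul, smul_eq_mul]
  have habs := abs_le.1 (G.abs_dotProduct_adjMatrix_mulVec_le y)
  constructor <;> nlinarith

theorem exists_eq_smul_sqrtAugDegree_of_augNormAdjMatrix_mulVec_eq (hG : G.Connected)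
    {x : V → ℝ} (h : G.augNormAdjMatrix *ᵥ x = x) : ∃ c : ℝ, x = c • G.sqrtAugDegree := by
  obtain ⟨y, rfl⟩ := G.exists_diagonal_sqrtAugDegree_mulVec_eq x
  have hlap : toLinearMap₂' ℝ (G.lapMatrix ℝ) y y = 0 := by
    have hrayleigh := congrArg ((diagonal G.sqrtAugDegree *ᵥ y) ⬝ᵥ ·) h
    simp only [dotProduct_augNormAdjMatrix_mulVec_diagonal,
      dotProduct_diagonal_sqrtAugDegree_mulVec_self] at hrayleigh
    rw [toLinearMap₂'_apply', lapMatrix, sub_mulVec, dotProduct_sub]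
    linarith
  have hconst := (G.lapMatrix_toLinearMap₂'_apply'_eq_zero_iff_forall_reachable y).1 hlap
  obtain ⟨v₀⟩ := hG.nonempty
  refine ⟨y v₀, funext fun v => ?_⟩
  rw [mulVec_diagonal, hconst v v₀ (hG v v₀), Pi.smul_apply, smul_eq_mul, mul_comm]

theorem one_mem_spectrum_augNormAdjMatrix [Nonempty V] : 1 ∈ spectrum ℝ G.augNormAdjMatrix := by
  rw [← spectrum_toLin']
  refine (Module.End.hasEigenvalue_of_hasEigenvector (x := G.sqrtAugDegree) ⟨?_, ?_⟩).mem_spectrum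
  · rw [Module.End.mem_eigenspace_iff, toLin'_apply, one_smul,
      augNormAdjMatrix_mulVec_sqrtAugDegree]
  · exact fun h => (G.sqrtAugDegree_pos (Classical.arbitrary V)).ne' (congrFun h _)

variable {G}

theorem eigenvalues_augNormAdjMatrix_mem_Ioc (hS : G.augNormAdjMatrix.IsHermitian) (j : V) :
    hS.eigenvalues j ∈ Set.Ioc (-1) 1 :=
  G.mem_Ioc_of_augNormAdjMatrix_mulVec_eq_smul
    (by simpa using hS.eigenvectorBasis.orthonormal.ne_zero j) (hS.mulVec_eigenvectorBasis j)

theorem subsingleton_eigenvalues_augNormAdjMatrix_eq_one (hG : G.Connected)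
    (hS : G.augNormAdjMatrix.IsHermitian) : {j | hS.eigenvalues j = 1}.Subsingleton := by
  have hvec {k : V} (hk : hS.eigenvalues k = 1) :
      ∃ c : ℝ, hS.eigenvectorBasis k = c • WithLp.toLp 2 G.sqrtAugDegree := by
    have heig := hS.mulVec_eigenvectorBasis k
    rw [hk, one_smul] at heig
    obtain ⟨c, hc⟩ := G.exists_eq_smul_sqrtAugDegree_of_augNormAdjMatrix_mulVec_eq hG heig
    exact ⟨c, WithLp.ofLp_injective 2 (by simpa using hc)⟩
  intro i hi j hj
  obtain ⟨c, hc⟩ := hvec hi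
  obtain ⟨d, hd⟩ := hvec hj
  exact hS.eigenvectorBasis.orthonormal.eq_of_eq_smul hc hd

end SimpleGraph

/-- **Spectral properties of the augmented normalized adjacency operator.**
For a finite simple connected graph `G` on `N ≥ 2` vertices, every eigenvalue `λ` of
`S̃ = (I+D)^{-1/2}(I+A)(I+D)^{-1/2}` satisfies `-1 < λ ≤ 1`; moreover `1` is an eigenvalue,
attained by the vector with entries `√(1 + deg v)`, and it is simple: in a nondecreasing
listing `μ` of the eigenvalues with multiplicity, `μ_N = 1` and `|μ_i| < 1` for `i < N`. -/
theorem augmented_normalized_adjacency_spectrum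
    {N : ℕ} (hN : 2 ≤ N)
    (G : SimpleGraph (Fin N)) [DecidableRel G.Adj]
    (hconn : G.Connected)
    (Sadj : Matrix (Fin N) (Fin N) ℝ)
    (hSdef : Sadj = Matrix.diagonal (fun v => (Real.sqrt (1 + G.degree v))⁻¹) *
      ((1 : Matrix (Fin N) (Fin N) ℝ) + G.adjMatrix ℝ) *
      Matrix.diagonal (fun v => (Real.sqrt (1 + G.degree v))⁻¹))
    (hS : Sadj.IsHermitian)
    (μ : Fin N → ℝ) (hμmono : Monotone μ)
    (σ : Equiv.Perm (Fin N)) (hμ : μ = hS.eigenvalues ∘ σ) :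
    (∀ lam ∈ spectrum ℝ Sadj, -1 < lam ∧ lam ≤ 1) ∧
    (Sadj *ᵥ (fun v => Real.sqrt (1 + G.degree v)) =
      (fun v => Real.sqrt (1 + G.degree v))) ∧
    μ ⟨N - 1, by omega⟩ = 1 ∧
    (∀ i : Fin N, (i : ℕ) < N - 1 → |μ i| < 1) := by
  obtain rfl : Sadj = G.augNormAdjMatrix := hSdef
  have hμ_apply (i : Fin N) : μ i = hS.eigenvalues (σ i) := congrFun hμ i
  have hbound (i : Fin N) : μ i ∈ Set.Ioc (-1) 1 :=
    hμ_apply i ▸ SimpleGraph.eigenvalues_augNormAdjMatrix_mem_Ioc hS (σ i)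
  have : Nonempty (Fin N) := ⟨⟨0, by omega⟩⟩
  have hone : (1 : ℝ) ∈ Set.range μ := by
    obtain ⟨j, hj⟩ := hS.spectrum_real_eq_range_eigenvalues ▸ G.one_mem_spectrum_augNormAdjMatrix
    exact ⟨σ.symm j, by rw [hμ_apply, Equiv.apply_symm_apply, hj]⟩
  have hsimple : {i | μ i = 1}.Subsingleton := fun i hi j hj =>
    σ.injective <| SimpleGraph.subsingleton_eigenvalues_augNormAdjMatrix_eq_one hconn hS
      ((hμ_apply i).symm.trans hi) ((hμ_apply j).symm.trans hj)
  obtain ⟨hlast, hlt⟩ := hμmono.apply_eq_and_lt_of_isTop (m := ⟨N - 1, by omega⟩)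
    (fun i => Fin.le_def.2 (Nat.le_sub_one_of_lt i.isLt)) (fun i => (hbound i).2) hone hsimple
  refine ⟨?_, G.augNormAdjMatrix_mulVec_sqrtAugDegree, hlast, fun i hi => ?_⟩
  · rw [hS.spectrum_real_eq_range_eigenvalues]
    rintro _ ⟨j, rfl⟩
    exact SimpleGraph.eigenvalues_augNormAdjMatrix_mem_Ioc hS j
  · exact abs_lt.2 ⟨(hbound i).1, hlt i (Fin.ne_of_lt hi)⟩
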